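/- For all n ≥ 3 and all k with 0 ≤ k ≤ F_{n−2}, one has c_{F_{n+2}+k} = c_{F_n+k} + c_k + c_{F_{n−1}+k}. -/

import Mathlib

/-- `σ = (1 + i√3)/2`, a primitive sixth root of unity. -/
noncomputable def σ : ℂ := (1 + Real.sqrt 3 * Complex.I) / 2

/-- The sequence with `c 0 = 0` and `c (n+1) = Σ_{k=0}^n σ^{sF k} σ̄^{sF (n-k)}`. -/
noncomputable def cseq (sF : ℕ → ℕ) (m : ℕ) : ℂ :=
  ∑ k ∈ Finset.range m, σ ^ (sF k) * ((starRingEnd ℂ) σ) ^ (sF (m - 1 - k))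

lemma conj_σ : (starRingEnd ℂ) σ = (1 - Real.sqrt 3 * Complex.I) / 2 := by
  simp [σ, map_div₀, map_add, map_mul, Complex.conj_I, Complex.conj_ofReal, map_ofNat]
  ring

lemma sqrt3_sq : (Real.sqrt 3 : ℂ) ^ 2 = 3 := by
  norm_cast
  rw [sq, Real.mul_self_sqrt (by norm_num : (0:ℝ) ≤ 3)]

lemma σ_mul_conj : σ * (starRingEnd ℂ) σ = 1 := by
  rw [conj_σ, σ]
  field_simp
  ring_nf
  rw [Complex.I_sq, sqrt3_sq]
  ring

lemma σ_add_conj : σ + (starRingEnd ℂ) σ = 1 := by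
  rw [conj_σ, σ]; ring

lemma σ_sq_add_conj_sq : σ^2 + ((starRingEnd ℂ) σ)^2 = -1 := by
  have h := σ_mul_conj
  have h2 := σ_add_conj
  have e : σ^2 + ((starRingEnd ℂ) σ)^2
      = (σ + (starRingEnd ℂ) σ)^2 - 2*(σ * (starRingEnd ℂ) σ) := by ring
  rw [e, h, h2]; ring

open List Nat in
lemma finset_zeck (S : Finset ℕ) (h2 : ∀ i ∈ S, 2 ≤ i)
    (hnc : ∀ i, ¬(i ∈ S ∧ i + 1 ∈ S)) :
    Nat.zeckendorf (∑ i ∈ S, Nat.fib i) = (S.sort (· ≤ ·)).reverse ∧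
    (S.sort (· ≤ ·)).reverse.length = S.card := by
  set l := S.sort (· ≤ ·) with hl
  have hmem : ∀ a ∈ l, a ∈ S := fun a ha => (Finset.mem_sort _).mp ha
  have hpw : l.Pairwise (fun a b => a + 2 ≤ b) := by
    refine List.Pairwise.imp_of_mem ?_ (Finset.sortedLT_sort S).pairwise
    intro a b ha hb hab
    have ha' := hmem a ha
    have hb' := hmem b hb
    have : b ≠ a + 1 := by
      intro h; exact hnc a ⟨ha', h ▸ hb'⟩
    omega
  have hrep : List.IsZeckendorfRep l.reverse := by
    rw [List.IsZeckendorfRep, show l.reverse ++ [0] = (0 :: l).reverse by simp,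
      List.isChain_reverse]
    refine List.isChain_cons.mpr ⟨?_, hpw.isChain⟩
    intro y hy
    have : y ∈ l := List.mem_of_mem_head? hy
    have := h2 y (hmem y this)
    simpa [flip] using by omega
  have hsum : ((l.reverse).map Nat.fib).sum = ∑ i ∈ S, Nat.fib i := by
    rw [List.map_reverse, List.sum_reverse]
    calc (l.map fib).sum = ((l.map fib : Multiset ℕ)).sum := (Multiset.sum_coe _).symm
      _ = ((S.val.map fib)).sum := by rw [← Multiset.map_coe, hl, Finset.sort_eq]
      _ = ∑ i ∈ S, fib i := rfl
  constructor
  · rw [← hsum]; exact Nat.zeckendorf_sum_fib hrep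
  · rw [List.length_reverse, hl, Finset.length_sort]

open List Nat in
lemma zeck_len_fib_add (t j : ℕ) (ht : 2 ≤ t) (hj : j < Nat.fib (t - 1)) :
    (Nat.zeckendorf (Nat.fib t + j)).length = (Nat.zeckendorf j).length + 1 := by
  have hrep := Nat.isZeckendorfRep_zeckendorf j
  have hrep2 : IsZeckendorfRep (t :: Nat.zeckendorf j) := by
    rw [IsZeckendorfRep, cons_append]
    refine List.isChain_cons.mpr ⟨?_, hrep⟩
    intro y hy
    match j, hy with
    | 0, hy => simp at hy; omega
    | (j+1), hy =>
      rw [Nat.zeckendorf_succ, cons_append, head?_cons, Option.mem_some_iff] at hy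
      subst hy
      have : Nat.greatestFib (j+1) < t - 1 := Nat.greatestFib_lt.mpr hj
      omega
  have hsum : ((t :: Nat.zeckendorf j).map fib).sum = fib t + j := by
    simp [Nat.sum_zeckendorf_fib]
  have h := Nat.zeckendorf_sum_fib hrep2
  rw [hsum] at h
  rw [h]; simp

lemma sF_zeck (sF : ℕ → ℕ)
    (hsF : ∀ n, ∃ S : Finset ℕ, (∀ i ∈ S, 2 ≤ i) ∧
      (∀ i, ¬(i ∈ S ∧ i + 1 ∈ S)) ∧ (∑ i ∈ S, Nat.fib i) = n ∧ sF n = S.card)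
    (n : ℕ) : sF n = (Nat.zeckendorf n).length := by
  obtain ⟨S, h2, hnc, hsum, hcard⟩ := hsF n
  obtain ⟨hz, hlen⟩ := finset_zeck S h2 hnc
  rw [hcard, ← hlen, ← hz, hsum]

lemma sum_range_add3 {M : Type*} [AddCommMonoid M] (f : ℕ → M) (a b c : ℕ) :
    ∑ i ∈ Finset.range (a + b + c), f i =
      (∑ i ∈ Finset.range a, f i) + (∑ i ∈ Finset.range b, f (a + i))
        + (∑ i ∈ Finset.range c, f (a + b + i)) := by
  rw [Finset.sum_range_add, Finset.sum_range_add]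

lemma sum_range_add5 {M : Type*} [AddCommMonoid M] (f : ℕ → M) (a b c d e : ℕ) :
    ∑ i ∈ Finset.range (a + b + c + d + e), f i =
      (∑ i ∈ Finset.range a, f i) + (∑ i ∈ Finset.range b, f (a + i))
        + (∑ i ∈ Finset.range c, f (a + b + i))
        + (∑ i ∈ Finset.range d, f (a + b + c + i))
        + (∑ i ∈ Finset.range e, f (a + b + c + d + i)) := by
  rw [Finset.sum_range_add, Finset.sum_range_add, Finset.sum_range_add, Finset.sum_range_add]

/-- For `k ≤ F_{n-2}`, `c (F_{n+2} + k) = c (F_n + k) + c k + c (F_{n-1} + k)`,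
where `sF` counts the terms in the Zeckendorf representation. -/
theorem c_fib_recurrence
    (sF : ℕ → ℕ)
    (hsF : ∀ n, ∃ S : Finset ℕ, (∀ i ∈ S, 2 ≤ i) ∧
      (∀ i, ¬(i ∈ S ∧ i + 1 ∈ S)) ∧ (∑ i ∈ S, Nat.fib i) = n ∧ sF n = S.card)
    (n k : ℕ) (hn : 3 ≤ n) (hk : k ≤ Nat.fib (n - 2)) :
    cseq sF (Nat.fib (n + 2) + k) =
      cseq sF (Nat.fib n + k) + cseq sF k + cseq sF (Nat.fib (n - 1) + k) := by
  obtain ⟨m, rfl⟩ : ∃ m, n = m + 3 := ⟨n - 3, by omega⟩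
  have key : ∀ t j, j < Nat.fib (t+1) → sF (Nat.fib (t+2) + j) = sF j + 1 := by
    intro t j hj
    rw [sF_zeck sF hsF, sF_zeck sF hsF]
    exact zeck_len_fib_add (t+2) j (by omega) hj
  have key5 : ∀ j, j < Nat.fib (m+4) → sF (Nat.fib (m+5) + j) = sF j + 1 :=
    fun j hj => key (m+3) j hj
  have key4 : ∀ j, j < Nat.fib (m+3) → sF (Nat.fib (m+4) + j) = sF j + 1 :=
    fun j hj => key (m+2) j hj
  have key3 : ∀ j, j < Nat.fib (m+2) → sF (Nat.fib (m+3) + j) = sF j + 1 :=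
    fun j hj => key (m+1) j hj
  have key2 : ∀ j, j < Nat.fib (m+1) → sF (Nat.fib (m+2) + j) = sF j + 1 :=
    fun j hj => key m j hj
  have e5 : Nat.fib (m+5) = Nat.fib (m+3) + Nat.fib (m+4) := Nat.fib_add_two
  have e4 : Nat.fib (m+4) = Nat.fib (m+2) + Nat.fib (m+3) := Nat.fib_add_two
  have e3 : Nat.fib (m+3) = Nat.fib (m+1) + Nat.fib (m+2) := Nat.fib_add_two
  have hpos : 0 < Nat.fib (m+1) := Nat.fib_pos.mpr (by omega)
  have hk' : k ≤ Nat.fib (m+1) := hk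
  have hle1 : Nat.fib (m+1) ≤ Nat.fib (m+2) := Nat.fib_mono (by omega)
  have hle2 : Nat.fib (m+2) ≤ Nat.fib (m+3) := Nat.fib_mono (by omega)
  have hle3 : Nat.fib (m+3) ≤ Nat.fib (m+4) := Nat.fib_mono (by omega)
  show cseq sF (Nat.fib (m+5) + k) =
      cseq sF (Nat.fib (m+3) + k) + cseq sF k + cseq sF (Nat.fib (m+2) + k)
  -- splits of the three RHS sequences
  have hC1a : cseq sF (Nat.fib (m+3) + k) =
      (starRingEnd ℂ) σ * cseq sF k
        + ∑ i ∈ Finset.range (Nat.fib (m+3)),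
            σ ^ sF (k + i) * ((starRingEnd ℂ) σ) ^ sF (k + Nat.fib (m+3) - 1 - (k + i)) := by
    rw [cseq, show Nat.fib (m+3) + k = k + Nat.fib (m+3) by omega, Finset.sum_range_add]
    congr 1
    rw [cseq, Finset.mul_sum]
    refine Finset.sum_congr rfl fun a ha => ?_
    have ha' : a < k := Finset.mem_range.mp ha
    rw [show k + Nat.fib (m+3) - 1 - a = Nat.fib (m+3) + (k - 1 - a) by omega,
      key3 (k - 1 - a) (by omega), pow_succ]
    ring
  have hC1b : cseq sF (Nat.fib (m+3) + k) =
      (∑ i ∈ Finset.range (Nat.fib (m+3)),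
        σ ^ sF i * ((starRingEnd ℂ) σ) ^ sF (Nat.fib (m+3) + k - 1 - i))
        + σ * cseq sF k := by
    rw [cseq, Finset.sum_range_add]
    congr 1
    rw [cseq, Finset.mul_sum]
    refine Finset.sum_congr rfl fun a ha => ?_
    have ha' : a < k := Finset.mem_range.mp ha
    rw [show Nat.fib (m+3) + k - 1 - (Nat.fib (m+3) + a) = k - 1 - a by omega,
      key3 a (by omega), pow_succ]
    ring
  have hC2 : cseq sF (Nat.fib (m+2) + k) =
      (starRingEnd ℂ) σ * cseq sF k
        + (∑ i ∈ Finset.range (Nat.fib (m+2) - k),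
            σ ^ sF (k + i) * ((starRingEnd ℂ) σ) ^ sF (k + (Nat.fib (m+2) - k) + k - 1 - (k + i)))
        + σ * cseq sF k := by
    rw [cseq, show Nat.fib (m+2) + k = k + (Nat.fib (m+2) - k) + k by omega, sum_range_add3]
    congr 1
    · congr 1
      rw [cseq, Finset.mul_sum]
      refine Finset.sum_congr rfl fun a ha => ?_
      have ha' : a < k := Finset.mem_range.mp ha
      rw [show k + (Nat.fib (m+2) - k) + k - 1 - a = Nat.fib (m+2) + (k - 1 - a) by omega,
        key2 (k - 1 - a) (by omega), pow_succ]
      ring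
    · rw [cseq, Finset.mul_sum]
      refine Finset.sum_congr rfl fun a ha => ?_
      have ha' : a < k := Finset.mem_range.mp ha
      rw [show k + (Nat.fib (m+2) - k) + a = Nat.fib (m+2) + a by omega,
        show k + (Nat.fib (m+2) - k) + k - 1 - (Nat.fib (m+2) + a) = k - 1 - a by omega,
        key2 a (by omega), pow_succ]
      ring
  -- the LHS split into five pieces
  rw [cseq, show Nat.fib (m+5) + k
      = k + Nat.fib (m+3) + (Nat.fib (m+2) - k) + Nat.fib (m+3) + k by omega,
    sum_range_add5]
  -- piece 1
  have hP1 : (∑ a ∈ Finset.range k,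
      σ ^ sF a * ((starRingEnd ℂ) σ)
        ^ sF (k + Nat.fib (m+3) + (Nat.fib (m+2) - k) + Nat.fib (m+3) + k - 1 - a))
      = (starRingEnd ℂ) σ * cseq sF k := by
    rw [cseq, Finset.mul_sum]
    refine Finset.sum_congr rfl fun a ha => ?_
    have ha' : a < k := Finset.mem_range.mp ha
    rw [show k + Nat.fib (m+3) + (Nat.fib (m+2) - k) + Nat.fib (m+3) + k - 1 - a
        = Nat.fib (m+5) + (k - 1 - a) by omega,
      key5 (k - 1 - a) (by omega), pow_succ]
    ring
  -- piece 2
  have hP2 : (∑ i ∈ Finset.range (Nat.fib (m+3)),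
      σ ^ sF (k + i) * ((starRingEnd ℂ) σ)
        ^ sF (k + Nat.fib (m+3) + (Nat.fib (m+2) - k) + Nat.fib (m+3) + k - 1 - (k + i)))
      = (starRingEnd ℂ) σ * ∑ i ∈ Finset.range (Nat.fib (m+3)),
          σ ^ sF (k + i) * ((starRingEnd ℂ) σ) ^ sF (k + Nat.fib (m+3) - 1 - (k + i)) := by
    rw [Finset.mul_sum]
    refine Finset.sum_congr rfl fun i hi => ?_
    have hi' : i < Nat.fib (m+3) := Finset.mem_range.mp hi
    rw [show k + Nat.fib (m+3) + (Nat.fib (m+2) - k) + Nat.fib (m+3) + k - 1 - (k + i)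
        = Nat.fib (m+4) + (Nat.fib (m+3) - 1 - i) by omega,
      key4 (Nat.fib (m+3) - 1 - i) (by omega),
      show k + Nat.fib (m+3) - 1 - (k + i) = Nat.fib (m+3) - 1 - i by omega, pow_succ]
    ring
  -- piece 3
  have hP3 : (∑ i ∈ Finset.range (Nat.fib (m+2) - k),
      σ ^ sF (k + Nat.fib (m+3) + i) * ((starRingEnd ℂ) σ)
        ^ sF (k + Nat.fib (m+3) + (Nat.fib (m+2) - k) + Nat.fib (m+3) + k - 1
            - (k + Nat.fib (m+3) + i)))
      = ∑ i ∈ Finset.range (Nat.fib (m+2) - k),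
          σ ^ sF (k + i) * ((starRingEnd ℂ) σ)
            ^ sF (k + (Nat.fib (m+2) - k) + k - 1 - (k + i)) := by
    refine Finset.sum_congr rfl fun i hi => ?_
    have hi' : i < Nat.fib (m+2) - k := Finset.mem_range.mp hi
    rw [show k + Nat.fib (m+3) + i = Nat.fib (m+3) + (k + i) by omega,
      key3 (k + i) (by omega),
      show k + Nat.fib (m+3) + (Nat.fib (m+2) - k) + Nat.fib (m+3) + k - 1
          - (Nat.fib (m+3) + (k + i)) = Nat.fib (m+3) + (Nat.fib (m+2) - 1 - i) by omega,
      key3 (Nat.fib (m+2) - 1 - i) (by omega),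
      show k + (Nat.fib (m+2) - k) + k - 1 - (k + i) = Nat.fib (m+2) - 1 - i by omega,
      pow_succ, pow_succ]
    have := σ_mul_conj
    calc σ ^ sF (k + i) * σ * (((starRingEnd ℂ) σ) ^ sF (Nat.fib (m+2) - 1 - i) * (starRingEnd ℂ) σ)
        = (σ * (starRingEnd ℂ) σ) * (σ ^ sF (k + i) * ((starRingEnd ℂ) σ) ^ sF (Nat.fib (m+2) - 1 - i)) := by ring
      _ = σ ^ sF (k + i) * ((starRingEnd ℂ) σ) ^ sF (Nat.fib (m+2) - 1 - i) := by rw [this]; ring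
  -- piece 4
  have hP4 : (∑ i ∈ Finset.range (Nat.fib (m+3)),
      σ ^ sF (k + Nat.fib (m+3) + (Nat.fib (m+2) - k) + i) * ((starRingEnd ℂ) σ)
        ^ sF (k + Nat.fib (m+3) + (Nat.fib (m+2) - k) + Nat.fib (m+3) + k - 1
            - (k + Nat.fib (m+3) + (Nat.fib (m+2) - k) + i)))
      = σ * ∑ i ∈ Finset.range (Nat.fib (m+3)),
          σ ^ sF i * ((starRingEnd ℂ) σ) ^ sF (Nat.fib (m+3) + k - 1 - i) := by
    rw [Finset.mul_sum]
    refine Finset.sum_congr rfl fun i hi => ?_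
    have hi' : i < Nat.fib (m+3) := Finset.mem_range.mp hi
    rw [show k + Nat.fib (m+3) + (Nat.fib (m+2) - k) + i = Nat.fib (m+4) + i by omega,
      key4 i (by omega),
      show k + Nat.fib (m+3) + (Nat.fib (m+2) - k) + Nat.fib (m+3) + k - 1
          - (Nat.fib (m+4) + i) = Nat.fib (m+3) + k - 1 - i by omega,
      pow_succ]
    ring
  -- piece 5
  have hP5 : (∑ i ∈ Finset.range k,
      σ ^ sF (k + Nat.fib (m+3) + (Nat.fib (m+2) - k) + Nat.fib (m+3) + i) * ((starRingEnd ℂ) σ)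
        ^ sF (k + Nat.fib (m+3) + (Nat.fib (m+2) - k) + Nat.fib (m+3) + k - 1
            - (k + Nat.fib (m+3) + (Nat.fib (m+2) - k) + Nat.fib (m+3) + i)))
      = σ * cseq sF k := by
    rw [cseq, Finset.mul_sum]
    refine Finset.sum_congr rfl fun i hi => ?_
    have hi' : i < k := Finset.mem_range.mp hi
    rw [show k + Nat.fib (m+3) + (Nat.fib (m+2) - k) + Nat.fib (m+3) + i
        = Nat.fib (m+5) + i by omega,
      key5 i (by omega),
      show k + Nat.fib (m+3) + (Nat.fib (m+2) - k) + Nat.fib (m+3) + k - 1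
          - (Nat.fib (m+5) + i) = k - 1 - i by omega,
      pow_succ]
    ring
  rw [hP1, hP2, hP3, hP4, hP5]
  have hs1 := σ_add_conj
  have hs2 := σ_sq_add_conj_sq
  linear_combination (-((starRingEnd ℂ) σ)) * hC1a + (-σ) * hC1b + (-1 : ℂ) * hC2
    + cseq sF (Nat.fib (m+3) + k) * hs1 - cseq sF k * hs2
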